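/- For every integer n ≥ 3, Φ(n) ≡ 0 (mod 3). -/

import Mathlib

/-!
Möbius inversion over the gcd gives `Φ(n) = ∑_{d ∣ n} μ(d) 2^(n/d)` for `n ≥ 2` (the empty set is
never relatively prime to `n ≠ 1`). Modulo 3 we have `2 ≡ -1`, and `∑_{d ∣ n} μ(d) (-1)^(n/d)`
vanishes for `n ≥ 3`: writing `(-1)^k = 2·[2 ∣ k] - 1`, it becomes `2 ∑_{d ∣ n/2} μ(d) - ∑_{d ∣ n} μ(d)`
(the first sum absent for odd `n`), and both sums vanish since neither `n` nor `n/2` equals 1.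
-/

/-- `Phi n` is the number of nonempty subsets of `{1, ..., n}` relatively prime to `n`. -/
def Phi (n : ℕ) : ℕ :=
  ((Finset.Icc 1 n).powerset.filter fun A => A.Nonempty ∧ (insert n A).gcd id = 1).card

open Finset ArithmeticFunction
open scoped ArithmeticFunction.Moebius

theorem sum_divisors_moebius (n : ℕ) : ∑ d ∈ n.divisors, μ d = if n = 1 then 1 else 0 := by
  rw [← coe_mul_zeta_apply, moebius_mul_coe_zeta, one_apply]

theorem filter_powerset_forall {α : Type*} (s : Finset α) (p : α → Prop) [DecidablePred p] :
    {A ∈ s.powerset | ∀ a ∈ A, p a} = {a ∈ s | p a}.powerset := by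
  ext A
  simp only [mem_filter, mem_powerset, subset_iff]
  grind

theorem card_powerset_Icc_filter_forall_dvd (n d : ℕ) :
    #{A ∈ (Icc 1 n).powerset | ∀ a ∈ A, d ∣ a} = 2 ^ (n / d) := by
  rw [filter_powerset_forall, card_powerset, ← zero_add 1, Icc_add_one_left_eq_Ioc,
    Nat.Ioc_filter_dvd_card_eq_div]

theorem card_powerset_filter_gcd_insert_eq_one {n : ℕ} (hn : n ≠ 0) (s : Finset ℕ) :
    (#{A ∈ s.powerset | (insert n A).gcd id = 1} : ℤ) =
      ∑ d ∈ n.divisors, μ d * #{A ∈ s.powerset | ∀ a ∈ A, d ∣ a} := by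
  have divisors_gcd (A : Finset ℕ) :
      ((insert n A).gcd id).divisors = {d ∈ n.divisors | ∀ a ∈ A, d ∣ a} := by
    have gcd_ne_zero : (insert n A).gcd id ≠ 0 :=
      fun h => hn (Finset.gcd_eq_zero_iff.1 h n (mem_insert_self n A))
    ext d
    rw [Nat.mem_divisors, mem_filter, Nat.mem_divisors, Finset.dvd_gcd_iff, forall_mem_insert]
    simp only [id, ne_eq, gcd_ne_zero, hn, not_false_eq_true, and_true]
  calc (#{A ∈ s.powerset | (insert n A).gcd id = 1} : ℤ)
      = ∑ A ∈ s.powerset, ∑ d ∈ ((insert n A).gcd id).divisors, μ d := by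
        simp only [sum_divisors_moebius, sum_boole]
    _ = ∑ d ∈ n.divisors, ∑ A ∈ s.powerset, if ∀ a ∈ A, d ∣ a then μ d else 0 := by
        simp only [divisors_gcd, sum_filter]
        exact sum_comm
    _ = _ := by simp only [← sum_filter, sum_const, nsmul_eq_mul, mul_comm]

theorem Phi_eq_card_powerset_filter {n : ℕ} (hn : n ≠ 1) :
    Phi n = #{A ∈ (Icc 1 n).powerset | (insert n A).gcd id = 1} := by
  refine congrArg card (filter_congr fun A _ => and_iff_right_of_imp fun hA => ?_)
  rw [nonempty_iff_ne_empty]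
  rintro rfl
  simp [hn] at hA

theorem Phi_eq_sum_moebius {n : ℕ} (hn : 2 ≤ n) :
    (Phi n : ℤ) = ∑ d ∈ n.divisors, μ d * 2 ^ (n / d) := by
  rw [Phi_eq_card_powerset_filter (by omega), card_powerset_filter_gcd_insert_eq_one (by omega)]
  simp only [card_powerset_Icc_filter_forall_dvd, Nat.cast_pow, Nat.cast_ofNat]

theorem filter_two_dvd_div_divisors_two_mul (m : ℕ) :
    {d ∈ (2 * m).divisors | 2 ∣ 2 * m / d} = m.divisors := by
  ext d
  rw [mem_filter, Nat.mem_divisors, Nat.mem_divisors]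
  constructor
  · rintro ⟨⟨hd, hm⟩, h2⟩
    rw [Nat.dvd_div_iff_mul_dvd hd, mul_comm] at h2
    exact ⟨Nat.dvd_of_mul_dvd_mul_left two_pos h2, by omega⟩
  · rintro ⟨hd, hm⟩
    exact ⟨⟨hd.mul_left 2, by omega⟩, Nat.mul_div_assoc 2 hd ▸ dvd_mul_right 2 _⟩

theorem sum_divisors_moebius_mul_neg_one_pow {n : ℕ} (hn : 3 ≤ n) :
    ∑ d ∈ n.divisors, μ d * (-1) ^ (n / d) = 0 := by
  have sum_even_codivisors : ∑ d ∈ n.divisors with 2 ∣ n / d, μ d = 0 := by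
    obtain ⟨m, rfl | rfl⟩ := n.even_or_odd'
    · rw [filter_two_dvd_div_divisors_two_mul, sum_divisors_moebius, if_neg (by omega)]
    · rw [filter_false_of_mem, sum_empty]
      intro d hd h2
      exact Nat.not_even_two_mul_add_one m
        (even_iff_two_dvd.2 (h2.trans (Nat.div_dvd_of_dvd (Nat.dvd_of_mem_divisors hd))))
  have neg_one_pow (d k : ℕ) : μ d * (-1) ^ k = 2 * (if 2 ∣ k then μ d else 0) - μ d := by
    rcases k.even_or_odd with hk | hk
    · rw [hk.neg_one_pow, if_pos (even_iff_two_dvd.mp hk)]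
      ring
    · rw [hk.neg_one_pow, if_neg hk.not_two_dvd_nat]
      ring
  rw [sum_congr rfl fun d _ => neg_one_pow d (n / d), sum_sub_distrib, ← mul_sum, ← sum_filter,
    sum_even_codivisors, sum_divisors_moebius, if_neg (by omega), mul_zero, sub_zero]

/-- Ayad–Kihel: `Φ(n) ≡ 0 (mod 3)` for every `n ≥ 3`. -/
theorem Phi_mod_three (n : ℕ) (hn : 3 ≤ n) : Phi n % 3 = 0 := by
  have h : ((Phi n : ℤ) : ZMod 3) = 0 := by
    have two_eq : (2 : ZMod 3) = -1 := rfl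
    rw [Phi_eq_sum_moebius (by omega)]
    push_cast
    rw [two_eq]
    exact_mod_cast congrArg (Int.cast : ℤ → ZMod 3) (sum_divisors_moebius_mul_neg_one_pow hn)
  rw [Int.cast_natCast, ZMod.natCast_eq_zero_iff] at h
  exact Nat.mod_eq_zero_of_dvd h
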